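/- The traveling-wave ODE system with identity viscosity matrix is invariant along the segments G–D, W–E, O–B: fix σ ∈ ℝ and a base state M ∈ Δ lying on the line μ_o s_w = μ_w s_o; then for every S ∈ Δ on the same line, the vector X(S) = −σ(S − M) + F(S) − F(M) is parallel to the direction vector (μ_w, −(μ_w + μ_o)) of that line. The analogous invariance holds for the line μ_o s_g = μ_g s_o with direction (−(μ_g + μ_o), μ_g), and for the line μ_g s_w = μ_w s_g with direction (μ_w, μ_g). -/

import Mathlib

open Matrix Polynomial

noncomputable section ThreePhaseFlow

/-- Oil saturation `s_o = 1 - s_w - s_g`. -/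
def so (u : ℝ × ℝ) : ℝ := 1 - u.1 - u.2

/-- The denominator `D(u) = s_w^2/μ_w + s_g^2/μ_g + s_o^2/μ_o`. -/
def Dfun (μw μg μo : ℝ) (u : ℝ × ℝ) : ℝ :=
  u.1 ^ 2 / μw + u.2 ^ 2 / μg + so u ^ 2 / μo

/-- Water fractional flow `f_w`. -/
def fw (μw μg μo : ℝ) (u : ℝ × ℝ) : ℝ := u.1 ^ 2 / (μw * Dfun μw μg μo u)

/-- Gas fractional flow `f_g`. -/
def fg (μw μg μo : ℝ) (u : ℝ × ℝ) : ℝ := u.2 ^ 2 / (μg * Dfun μw μg μo u)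

/-- Oil fractional flow `f_o`. -/
def fo (μw μg μo : ℝ) (u : ℝ × ℝ) : ℝ := so u ^ 2 / (μo * Dfun μw μg μo u)

/-- The flux map `F(u) = (f_w(u), f_g(u))`. -/
def flux (μw μg μo : ℝ) (u : ℝ × ℝ) : ℝ × ℝ :=
  (fw μw μg μo u, fg μw μg μo u)

/-- The saturation triangle `Δ`. -/
def satTriangle : Set (ℝ × ℝ) := {u | 0 ≤ u.1 ∧ 0 ≤ u.2 ∧ u.1 + u.2 ≤ 1}

/-- The Jacobian matrix `J(u)` of the flux map at `u`. -/
def jac (μw μg μo : ℝ) (u : ℝ × ℝ) : Matrix (Fin 2) (Fin 2) ℝ :=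
  !![fderiv ℝ (fw μw μg μo) u (1, 0), fderiv ℝ (fw μw μg μo) u (0, 1);
     fderiv ℝ (fg μw μg μo) u (1, 0), fderiv ℝ (fg μw μg μo) u (0, 1)]

lemma Dfun_pos {μw μg μo : ℝ} (hw : 0 < μw) (hg : 0 < μg) (ho : 0 < μo)
    {u : ℝ × ℝ} (hu : u ∈ satTriangle) : 0 < Dfun μw μg μo u := by
  obtain ⟨h1, h2, h3⟩ := hu
  have hw' : 0 ≤ u.1 ^ 2 / μw := div_nonneg (sq_nonneg _) hw.le
  have hg' : 0 ≤ u.2 ^ 2 / μg := div_nonneg (sq_nonneg _) hg.le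
  have ho' : 0 ≤ so u ^ 2 / μo := div_nonneg (sq_nonneg _) ho.le
  unfold Dfun
  by_cases hx : u.1 = 0
  · by_cases hy : u.2 = 0
    · have : so u = 1 := by simp [so, hx, hy]
      have : 0 < so u ^ 2 / μo := by rw [this]; positivity
      linarith
    · have : 0 < u.2 ^ 2 / μg := by positivity
      linarith
  · have : 0 < u.1 ^ 2 / μw := by positivity
    linarith

lemma sum_fractions {μw μg μo : ℝ} (hw : μw ≠ 0) (hg : μg ≠ 0) (ho : μo ≠ 0)
    {u : ℝ × ℝ} (hD : Dfun μw μg μo u ≠ 0) :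
    fw μw μg μo u + fg μw μg μo u + fo μw μg μo u = 1 := by
  unfold fw fg fo
  field_simp
  have h : Dfun μw μg μo u * (μw * μg * μo) =
      u.1 ^ 2 * (μg * μo) + u.2 ^ 2 * (μw * μo) + so u ^ 2 * (μw * μg) := by
    unfold Dfun; field_simp
  linear_combination -h

/-- the traveling-wave ODE with identity viscosity matrix is invariant
along the segments `G–D`, `W–E`, `O–B`: the vector field
`X(S) = -σ(S - M) + F(S) - F(M)` is parallel to the line direction whenever the base
state `M` and the state `S` both lie on the line. -/
theorem traveling_wave_invariant_lines (μw μg μo : ℝ)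
    (hw : 0 < μw) (hg : 0 < μg) (ho : 0 < μo) :
    (∀ (σ : ℝ) (M : ℝ × ℝ), M ∈ satTriangle → μo * M.1 = μw * so M →
      ∀ S ∈ satTriangle, μo * S.1 = μw * so S →
        ∃ c : ℝ, (-σ) • (S - M) + (flux μw μg μo S - flux μw μg μo M) =
          c • ((μw, -(μw + μo)) : ℝ × ℝ)) ∧
    (∀ (σ : ℝ) (M : ℝ × ℝ), M ∈ satTriangle → μo * M.2 = μg * so M →
      ∀ S ∈ satTriangle, μo * S.2 = μg * so S →
        ∃ c : ℝ, (-σ) • (S - M) + (flux μw μg μo S - flux μw μg μo M) =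
          c • ((-(μg + μo), μg) : ℝ × ℝ)) ∧
    (∀ (σ : ℝ) (M : ℝ × ℝ), M ∈ satTriangle → μg * M.1 = μw * M.2 →
      ∀ S ∈ satTriangle, μg * S.1 = μw * S.2 →
        ∃ c : ℝ, (-σ) • (S - M) + (flux μw μg μo S - flux μw μg μo M) =
          c • ((μw, μg) : ℝ × ℝ)) := by
  have hw' := hw.ne'
  have hg' := hg.ne'
  have ho' := ho.ne'
  refine ⟨?_, ?_, ?_⟩
  · -- line μo s_w = μw s_o, direction (μw, -(μw+μo))
    intro σ M hM hlM S hS hlS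
    have hDM := (Dfun_pos hw hg ho hM).ne'
    have hDS := (Dfun_pos hw hg ho hS).ne'
    have hfoS : fo μw μg μo S = (μo / μw) * fw μw μg μo S := by
      have hsoS : so S = μo * S.1 / μw := by field_simp; linarith [hlS]
      unfold fo fw; rw [hsoS]; field_simp
    have hfoM : fo μw μg μo M = (μo / μw) * fw μw μg μo M := by
      have hsoM : so M = μo * M.1 / μw := by field_simp; linarith [hlM]
      unfold fo fw; rw [hsoM]; field_simp
    have hsumS := sum_fractions hw' hg' ho' hDS
    have hsumM := sum_fractions hw' hg' ho' hDM
    have hlin : (S.2 - M.2) * μw = -(μw + μo) * (S.1 - M.1) := by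
      simp only [so] at hlS hlM; nlinarith [hlS, hlM]
    refine ⟨(-σ * (S.1 - M.1) + (fw μw μg μo S - fw μw μg μo M)) / μw, ?_⟩
    rw [Prod.ext_iff]
    constructor
    · simp only [flux, Prod.smul_fst, Prod.fst_add, Prod.fst_sub, smul_eq_mul]
      field_simp
    · simp only [flux, Prod.smul_snd, Prod.snd_add, Prod.snd_sub, smul_eq_mul]
      have hgS : fg μw μg μo S = 1 - fw μw μg μo S - (μo / μw) * fw μw μg μo S := by
        rw [← hfoS]; linarith [hsumS]
      have hgM : fg μw μg μo M = 1 - fw μw μg μo M - (μo / μw) * fw μw μg μo M := by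
        rw [← hfoM]; linarith [hsumM]
      rw [hgS, hgM]
      field_simp
      linear_combination (-σ) * hlin
  · -- line μo s_g = μg s_o, direction (-(μg+μo), μg)
    intro σ M hM hlM S hS hlS
    have hDM := (Dfun_pos hw hg ho hM).ne'
    have hDS := (Dfun_pos hw hg ho hS).ne'
    have hfoS : fo μw μg μo S = (μo / μg) * fg μw μg μo S := by
      have hsoS : so S = μo * S.2 / μg := by field_simp; linarith [hlS]
      unfold fo fg; rw [hsoS]; field_simp
    have hfoM : fo μw μg μo M = (μo / μg) * fg μw μg μo M := by
      have hsoM : so M = μo * M.2 / μg := by field_simp; linarith [hlM]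
      unfold fo fg; rw [hsoM]; field_simp
    have hsumS := sum_fractions hw' hg' ho' hDS
    have hsumM := sum_fractions hw' hg' ho' hDM
    have hlin : (S.1 - M.1) * μg = -(μg + μo) * (S.2 - M.2) := by
      simp only [so] at hlS hlM; nlinarith [hlS, hlM]
    refine ⟨(-σ * (S.2 - M.2) + (fg μw μg μo S - fg μw μg μo M)) / μg, ?_⟩
    rw [Prod.ext_iff]
    constructor
    · simp only [flux, Prod.smul_fst, Prod.fst_add, Prod.fst_sub, smul_eq_mul]
      have hwS : fw μw μg μo S = 1 - fg μw μg μo S - (μo / μg) * fg μw μg μo S := by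
        rw [← hfoS]; linarith [hsumS]
      have hwM : fw μw μg μo M = 1 - fg μw μg μo M - (μo / μg) * fg μw μg μo M := by
        rw [← hfoM]; linarith [hsumM]
      rw [hwS, hwM]
      field_simp
      linear_combination (-σ) * hlin
    · simp only [flux, Prod.smul_snd, Prod.snd_add, Prod.snd_sub, smul_eq_mul]
      field_simp
  · -- line μg s_w = μw s_g, direction (μw, μg)
    intro σ M hM hlM S hS hlS
    have hDM := (Dfun_pos hw hg ho hM).ne'
    have hDS := (Dfun_pos hw hg ho hS).ne'
    have hfgS : fg μw μg μo S = (μg / μw) * fw μw μg μo S := by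
      have h2S : S.2 = μg * S.1 / μw := by field_simp; linarith [hlS]
      unfold fg fw; rw [h2S]; field_simp
    have hfgM : fg μw μg μo M = (μg / μw) * fw μw μg μo M := by
      have h2M : M.2 = μg * M.1 / μw := by field_simp; linarith [hlM]
      unfold fg fw; rw [h2M]; field_simp
    have hlin : (S.2 - M.2) * μw = μg * (S.1 - M.1) := by
      nlinarith [hlS, hlM]
    refine ⟨(-σ * (S.1 - M.1) + (fw μw μg μo S - fw μw μg μo M)) / μw, ?_⟩
    rw [Prod.ext_iff]
    constructor
    · simp only [flux, Prod.smul_fst, Prod.fst_add, Prod.fst_sub, smul_eq_mul]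
      field_simp
    · simp only [flux, Prod.smul_snd, Prod.snd_add, Prod.snd_sub, smul_eq_mul]
      rw [hfgS, hfgM]
      field_simp
      linear_combination (-σ) * hlin

end ThreePhaseFlow
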